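/- Assume σ_min(A) > 1 and let x* be the unique solution of Ax - |x| - b = 0. Then for all x ∈ ℝⁿ: (1/(L₁ + L₂)) ‖r(x)‖ ≤ ‖x - x*‖ ≤ ((L₁ + L₂)/μ) ‖r(x)‖, where L₁ = ‖A + I‖, L₂ = ‖A - I‖, μ = σ_min(A)² - 1, and r(x) = Ax - |x| - b. -/

import Mathlib

open Matrix
open scoped BigOperators

/-- Euclidean norm of a vector in ℝⁿ. -/
noncomputable def evnorm {n : ℕ} (x : Fin n → ℝ) : ℝ := Real.sqrt (∑ i, x i ^ 2)

/-- Componentwise absolute value. -/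
def vabs {n : ℕ} (x : Fin n → ℝ) : Fin n → ℝ := fun i => |x i|

/-- Spectral norm: sup of ‖Ax‖ over unit vectors x. -/
noncomputable def specNorm {n : ℕ} (A : Matrix (Fin n) (Fin n) ℝ) : ℝ :=
  sSup {c : ℝ | ∃ x : Fin n → ℝ, evnorm x = 1 ∧ c = evnorm (A *ᵥ x)}

/-- Smallest singular value: inf of ‖Ax‖ over unit vectors x. -/
noncomputable def sigmaMin {n : ℕ} (A : Matrix (Fin n) (Fin n) ℝ) : ℝ :=
  sInf {c : ℝ | ∃ x : Fin n → ℝ, evnorm x = 1 ∧ c = evnorm (A *ᵥ x)}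

namespace Stmt2Aux

variable {n : ℕ}

lemma evnorm_eq_norm (x : Fin n → ℝ) :
    evnorm x = ‖(WithLp.equiv 2 (Fin n → ℝ)).symm x‖ := by
  rw [EuclideanSpace.norm_eq]
  simp [evnorm, Real.norm_eq_abs, sq_abs]

lemma evnorm_nonneg (x : Fin n → ℝ) : 0 ≤ evnorm x := Real.sqrt_nonneg _

lemma evnorm_add_le (x y : Fin n → ℝ) : evnorm (x + y) ≤ evnorm x + evnorm y := by
  simpa [evnorm_eq_norm] using
    norm_add_le ((WithLp.equiv 2 (Fin n → ℝ)).symm x) ((WithLp.equiv 2 (Fin n → ℝ)).symm y)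

lemma evnorm_smul (c : ℝ) (x : Fin n → ℝ) : evnorm (c • x) = |c| * evnorm x := by
  simpa [evnorm_eq_norm, Real.norm_eq_abs] using
    norm_smul c ((WithLp.equiv 2 (Fin n → ℝ)).symm x)

lemma evnorm_mulVec (A : Matrix (Fin n) (Fin n) ℝ) (x : Fin n → ℝ) :
    evnorm (A *ᵥ x) =
      ‖Matrix.toEuclideanLin A ((WithLp.equiv 2 (Fin n → ℝ)).symm x)‖ := by
  exact evnorm_eq_norm _

set_option maxHeartbeats 1000000 in
set_option synthInstance.maxHeartbeats 400000 in
lemma bddAbove_set (A : Matrix (Fin n) (Fin n) ℝ) :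
    BddAbove {c : ℝ | ∃ x : Fin n → ℝ, evnorm x = 1 ∧ c = evnorm (A *ᵥ x)} := by
  refine ⟨‖LinearMap.toContinuousLinearMap (Matrix.toEuclideanLin A)‖, ?_⟩
  rintro c ⟨x, hx, rfl⟩
  rw [evnorm_mulVec]
  have := (LinearMap.toContinuousLinearMap (Matrix.toEuclideanLin A)).le_opNorm
      ((WithLp.equiv 2 (Fin n → ℝ)).symm x)
  rw [← evnorm_eq_norm, hx, mul_one] at this
  exact this

lemma bddBelow_set (A : Matrix (Fin n) (Fin n) ℝ) :
    BddBelow {c : ℝ | ∃ x : Fin n → ℝ, evnorm x = 1 ∧ c = evnorm (A *ᵥ x)} := by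
  refine ⟨0, ?_⟩
  rintro c ⟨x, hx, rfl⟩
  exact evnorm_nonneg _

lemma mulVec_le_specNorm (A : Matrix (Fin n) (Fin n) ℝ) (v : Fin n → ℝ) :
    evnorm (A *ᵥ v) ≤ specNorm A * evnorm v := by
  rcases eq_or_ne (evnorm v) 0 with h0 | h0
  · have : v = 0 := by
      have := evnorm_eq_norm v
      rw [h0] at this
      have hz : (WithLp.equiv 2 (Fin n → ℝ)).symm v = 0 := by
        exact norm_eq_zero.mp this.symm
      simpa using congrArg (WithLp.equiv 2 (Fin n → ℝ)) hz
    simp [this, evnorm, Matrix.mulVec_zero]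
  · have hpos : 0 < evnorm v := lt_of_le_of_ne (evnorm_nonneg v) (Ne.symm h0)
    set u := (evnorm v)⁻¹ • v with hu
    have hunorm : evnorm u = 1 := by
      rw [hu, evnorm_smul, abs_of_pos (inv_pos.mpr hpos)]
      field_simp
    have hmem : evnorm (A *ᵥ u) ∈
        {c : ℝ | ∃ x : Fin n → ℝ, evnorm x = 1 ∧ c = evnorm (A *ᵥ x)} :=
      ⟨u, hunorm, rfl⟩
    have hle : evnorm (A *ᵥ u) ≤ specNorm A := le_csSup (bddAbove_set A) hmem
    have hAu : evnorm (A *ᵥ u) = (evnorm v)⁻¹ * evnorm (A *ᵥ v) := by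
      rw [hu, Matrix.mulVec_smul, evnorm_smul, abs_of_pos (inv_pos.mpr hpos)]
    rw [hAu] at hle
    calc evnorm (A *ᵥ v) = evnorm v * ((evnorm v)⁻¹ * evnorm (A *ᵥ v)) := by
          field_simp
      _ ≤ evnorm v * specNorm A := by
          exact mul_le_mul_of_nonneg_left hle hpos.le
      _ = specNorm A * evnorm v := mul_comm _ _

lemma sigmaMin_le_mulVec (A : Matrix (Fin n) (Fin n) ℝ) (v : Fin n → ℝ) :
    sigmaMin A * evnorm v ≤ evnorm (A *ᵥ v) := by
  rcases eq_or_ne (evnorm v) 0 with h0 | h0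
  · rw [h0, mul_zero]; exact evnorm_nonneg _
  · have hpos : 0 < evnorm v := lt_of_le_of_ne (evnorm_nonneg v) (Ne.symm h0)
    set u := (evnorm v)⁻¹ • v with hu
    have hunorm : evnorm u = 1 := by
      rw [hu, evnorm_smul, abs_of_pos (inv_pos.mpr hpos)]
      field_simp
    have hmem : evnorm (A *ᵥ u) ∈
        {c : ℝ | ∃ x : Fin n → ℝ, evnorm x = 1 ∧ c = evnorm (A *ᵥ x)} :=
      ⟨u, hunorm, rfl⟩
    have hle : sigmaMin A ≤ evnorm (A *ᵥ u) := csInf_le (bddBelow_set A) hmem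
    have hAu : evnorm (A *ᵥ u) = (evnorm v)⁻¹ * evnorm (A *ᵥ v) := by
      rw [hu, Matrix.mulVec_smul, evnorm_smul, abs_of_pos (inv_pos.mpr hpos)]
    rw [hAu] at hle
    calc sigmaMin A * evnorm v ≤ ((evnorm v)⁻¹ * evnorm (A *ᵥ v)) * evnorm v :=
          mul_le_mul_of_nonneg_right hle hpos.le
      _ = evnorm (A *ᵥ v) := by field_simp

lemma evnorm_vabs_sub (x y : Fin n → ℝ) :
    evnorm (vabs x - vabs y) ≤ evnorm (x - y) := by
  unfold evnorm
  apply Real.sqrt_le_sqrt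
  apply Finset.sum_le_sum
  intro i _
  have h1 : |(vabs x - vabs y) i| ≤ |(x - y) i| := by
    simpa [vabs] using abs_abs_sub_abs_le_abs_sub (x i) (y i)
  calc ((vabs x - vabs y) i) ^ 2 = |(vabs x - vabs y) i| ^ 2 := (sq_abs _).symm
    _ ≤ |(x - y) i| ^ 2 := pow_le_pow_left₀ (abs_nonneg _) h1 2
    _ = ((x - y) i) ^ 2 := sq_abs _

end Stmt2Aux

open Stmt2Aux in
theorem stmt2 {n : ℕ} (A : Matrix (Fin n) (Fin n) ℝ) (b : Fin n → ℝ)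
    (hA : 1 < sigmaMin A) (xs : Fin n → ℝ)
    (hxs : A *ᵥ xs - vabs xs - b = 0) :
    ∀ x : Fin n → ℝ,
      (1 / (specNorm (A + 1) + specNorm (A - 1))) * evnorm (A *ᵥ x - vabs x - b)
        ≤ evnorm (x - xs) ∧
      evnorm (x - xs) ≤
        ((specNorm (A + 1) + specNorm (A - 1)) / (sigmaMin A ^ 2 - 1)) *
          evnorm (A *ᵥ x - vabs x - b) := by
  intro x
  -- n ≠ 0
  have hn : n ≠ 0 := by
    intro h
    subst h
    have hempty : {c : ℝ | ∃ x : Fin 0 → ℝ, evnorm x = 1 ∧ c = evnorm ((A : Matrix (Fin 0) (Fin 0) ℝ) *ᵥ x)} = ∅ := by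
      ext c
      simp only [Set.mem_setOf_eq, Set.mem_empty_iff_false, iff_false]
      rintro ⟨y, hy, -⟩
      simp [evnorm] at hy
    rw [sigmaMin, hempty, Real.sInf_empty] at hA
    linarith
  -- a unit vector exists
  obtain ⟨i0⟩ : Nonempty (Fin n) := ⟨⟨0, Nat.pos_of_ne_zero hn⟩⟩
  have hu1 : evnorm (Pi.single i0 1 : Fin n → ℝ) = 1 := by
    unfold evnorm
    rw [Finset.sum_eq_single i0]
    · simp
    · intro j _ hj; simp [Pi.single_apply, hj]
    · simp
  set L := specNorm (A + 1) + specNorm (A - 1) with hL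
  set σ := sigmaMin A with hσ
  -- basic split identities
  have hsplitA : ∀ v : Fin n → ℝ, 2 * evnorm (A *ᵥ v) ≤ L * evnorm v := by
    intro v
    have h1 : (A + 1) *ᵥ v + (A - 1) *ᵥ v = (2 : ℝ) • (A *ᵥ v) := by
      simp [Matrix.add_mulVec, Matrix.sub_mulVec, Matrix.one_mulVec, two_smul]
    have h2 : evnorm ((2 : ℝ) • (A *ᵥ v)) ≤ evnorm ((A + 1) *ᵥ v) + evnorm ((A - 1) *ᵥ v) := by
      rw [← h1]; exact evnorm_add_le _ _
    rw [evnorm_smul] at h2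
    have h3 := mulVec_le_specNorm (A + 1) v
    have h4 := mulVec_le_specNorm (A - 1) v
    have : |(2 : ℝ)| = 2 := by norm_num
    rw [this] at h2
    calc 2 * evnorm (A *ᵥ v) ≤ evnorm ((A + 1) *ᵥ v) + evnorm ((A - 1) *ᵥ v) := h2
      _ ≤ specNorm (A + 1) * evnorm v + specNorm (A - 1) * evnorm v := add_le_add h3 h4
      _ = L * evnorm v := by ring
  have hsplitI : ∀ v : Fin n → ℝ, 2 * evnorm v ≤ L * evnorm v := by
    intro v
    have h1 : (A + 1) *ᵥ v - (A - 1) *ᵥ v = (2 : ℝ) • v := by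
      simp [Matrix.add_mulVec, Matrix.sub_mulVec, Matrix.one_mulVec, two_smul]
    have h2 : evnorm ((2 : ℝ) • v) ≤ evnorm ((A + 1) *ᵥ v) + evnorm ((A - 1) *ᵥ v) := by
      rw [← h1]
      have : (A + 1) *ᵥ v - (A - 1) *ᵥ v = (A + 1) *ᵥ v + (-1 : ℝ) • ((A - 1) *ᵥ v) := by
        simp [sub_eq_add_neg]
      rw [this]
      calc evnorm ((A + 1) *ᵥ v + (-1 : ℝ) • ((A - 1) *ᵥ v))
          ≤ evnorm ((A + 1) *ᵥ v) + evnorm ((-1 : ℝ) • ((A - 1) *ᵥ v)) := evnorm_add_le _ _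
        _ = evnorm ((A + 1) *ᵥ v) + evnorm ((A - 1) *ᵥ v) := by rw [evnorm_smul]; norm_num
    rw [evnorm_smul] at h2
    have h3 := mulVec_le_specNorm (A + 1) v
    have h4 := mulVec_le_specNorm (A - 1) v
    have : |(2 : ℝ)| = 2 := by norm_num
    rw [this] at h2
    calc 2 * evnorm v ≤ evnorm ((A + 1) *ᵥ v) + evnorm ((A - 1) *ᵥ v) := h2
      _ ≤ specNorm (A + 1) * evnorm v + specNorm (A - 1) * evnorm v := add_le_add h3 h4
      _ = L * evnorm v := by ring
  -- 2 ≤ L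
  have hL2 : 2 ≤ L := by
    have := hsplitI (Pi.single i0 1)
    rw [hu1] at this
    linarith
  have hLpos : 0 < L := by linarith
  -- σ + 1 ≤ L
  have hσL : σ + 1 ≤ L := by
    have h1 := sigmaMin_le_mulVec A (Pi.single i0 1)
    have h2 := hsplitA (Pi.single i0 1)
    rw [hu1] at h1 h2
    rw [hσ]
    nlinarith
  -- setup
  set e := x - xs with he
  set r := A *ᵥ x - vabs x - b with hr
  have hb : b = A *ᵥ xs - vabs xs := by
    have := hxs
    funext i
    have hi := congrFun hxs i
    simp only [Pi.sub_apply, Pi.zero_apply] at hi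
    simp only [Pi.sub_apply]
    linarith
  have hrd : r = A *ᵥ e - (vabs x - vabs xs) := by
    rw [hr, hb, he, Matrix.mulVec_sub]
    abel
  have hd : evnorm (vabs x - vabs xs) ≤ evnorm e := by
    rw [he]; exact evnorm_vabs_sub x xs
  have hAe2 : 2 * evnorm (A *ᵥ e) ≤ L * evnorm e := hsplitA e
  have he2 : 2 * evnorm e ≤ L * evnorm e := hsplitI e
  have hσe : σ * evnorm e ≤ evnorm (A *ᵥ e) := sigmaMin_le_mulVec A e
  -- upper bound on ‖r‖
  have hrub : evnorm r ≤ L * evnorm e := by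
    have h1 : evnorm r ≤ evnorm (A *ᵥ e) + evnorm (vabs x - vabs xs) := by
      rw [hrd]
      have : A *ᵥ e - (vabs x - vabs xs) = A *ᵥ e + (-1 : ℝ) • (vabs x - vabs xs) := by
        module
      rw [this]
      calc evnorm (A *ᵥ e + (-1 : ℝ) • (vabs x - vabs xs))
          ≤ evnorm (A *ᵥ e) + evnorm ((-1 : ℝ) • (vabs x - vabs xs)) := evnorm_add_le _ _
        _ = evnorm (A *ᵥ e) + evnorm (vabs x - vabs xs) := by rw [evnorm_smul]; norm_num
    linarith
  -- lower bound: (σ - 1) ‖e‖ ≤ ‖r‖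
  have hrlb : (σ - 1) * evnorm e ≤ evnorm r := by
    have h1 : evnorm (A *ᵥ e) ≤ evnorm r + evnorm (vabs x - vabs xs) := by
      have : A *ᵥ e = r + (vabs x - vabs xs) := by rw [hrd]; abel
      rw [this]
      exact evnorm_add_le _ _
    linarith
  constructor
  · rw [div_mul_eq_mul_div, one_mul, div_le_iff₀ hLpos, mul_comm]
    exact hrub
  · have hσ1 : 1 < σ := hA
    have hμpos : 0 < σ ^ 2 - 1 := by nlinarith
    rw [div_mul_eq_mul_div, le_div_iff₀ hμpos]
    have hrnn : 0 ≤ evnorm r := evnorm_nonneg r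
    have hennn : 0 ≤ evnorm e := evnorm_nonneg e
    nlinarith [mul_le_mul_of_nonneg_left hrlb (by linarith : (0:ℝ) ≤ σ + 1),
      mul_le_mul_of_nonneg_right hσL hrnn]
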